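/- arXiv:2310.03058 — 2 statements merged into one kernel-verified Lean document; each statement's English description precedes it below -/
import Mathlib

section
/- Consider the VNLM. For every ε > 0 there exist δ > 0 and an initial value x₀*(ε) > 0 such that every solution x of the VNLM on an interval [0, b) with b > δ and x(0) = x₀*(ε) satisfies x(t) > k_max·(r/(a·k_min) + 1) + ε for all t ∈ [0, δ]. -/
open Set Filter MeasureTheory

/-- The variable carrying capacity `k(t) = (k_max − k_min)·(cos(dπt)+1)/2 + k_min`. -/
noncomputable def kcap (kmin kmax d t : ℝ) : ℝ :=
  (kmax - kmin) * ((Real.cos (d * Real.pi * t) + 1) / 2) + kmin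

/-- The cumulative density `h(t) = a·∫₀ᵗ x(s) ds`. -/
noncomputable def hcum (a : ℝ) (x : ℝ → ℝ) (t : ℝ) : ℝ :=
  a * ∫ s in (0:ℝ)..t, x s

/-- `x` is a (C¹) solution of the VNLM on the set `D`. -/
def IsVNLMSolOn (a r d kmin kmax : ℝ) (x : ℝ → ℝ) (D : Set ℝ) : Prop :=
  ContinuousOn x D ∧
  ∀ t ∈ D, HasDerivWithinAt x
    ((r - hcum a x t) * x t * (1 - x t / kcap kmin kmax d t)) D t

open Topology

/-!
Compare `x` with the Riccati barrier `φ t = x₀ / (1 + c t)`, `c = 2 r x₀ / k_min`, which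
solves `φ' = -(2 r / k_min) φ²` and stays above `x₀ / 2` up to `t = 1 / c`. If `φ ≤ x` on
`[0, t]`, then `x > 0` there, so `h t ≥ 0`, and `x t ≥ x₀ / 2 ≥ k(t)`; for such values the
right-hand side of the VNLM is at least `-(r / k_min) x²`, which exceeds `φ'` at a contact
point. Since `h` sees the whole past of `x`, the fencing argument has to carry `φ ≤ x` on
`[0, t]`, not only at `t`.
-/

theorem HasDerivWithinAt.eventually_pos_nhdsGT {g : ℝ → ℝ} {g' t : ℝ}
    (hg : HasDerivWithinAt g g' (Ici t) t) (hg0 : g t = 0) (hg' : 0 < g') :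
    ∀ᶠ s in 𝓝[>] t, 0 < g s := by
  have hslope := (hasDerivWithinAt_iff_tendsto_slope' (lt_irrefl t)).1 hg.Ioi_of_Ici
  filter_upwards [hslope.eventually (eventually_gt_nhds hg'), self_mem_nhdsWithin]
    with s hs hts
  exact pos_of_slope_pos hts hs hg0

theorem boundary_le_image_of_deriv_boundary_lt_deriv_right {f f' B B' : ℝ → ℝ} {a b : ℝ}
    (hf : ContinuousOn f (Icc a b)) (hf' : ∀ t ∈ Ico a b, HasDerivWithinAt f (f' t) (Ici t) t)
    (hB : ContinuousOn B (Icc a b)) (hB' : ∀ t ∈ Ico a b, HasDerivWithinAt B (B' t) (Ici t) t)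
    (ha : B a ≤ f a)
    (bound : ∀ t ∈ Ico a b, (∀ s ∈ Icc a t, B s ≤ f s) → f t = B t → B' t < f' t) :
    ∀ ⦃t⦄, t ∈ Icc a b → B t ≤ f t := by
  have hclosed : IsClosed ({t | B t ≤ f t} ∩ Icc a b) := by
    rw [inter_comm]
    exact (hB.prodMk hf).preimage_isClosed_of_isClosed isClosed_Icc
      OrderClosedTopology.isClosed_le'
  refine hclosed.Icc_subset_of_forall_mem_nhdsGT_of_Icc_subset ha fun t ht hhist => ?_
  have hfB := (hf' t ht).sub (hB' t ht)
  have hle : B t ≤ f t := hhist ⟨ht.1, le_rfl⟩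
  rcases hle.lt_or_eq with hlt | heq
  · have hcont : ContinuousWithinAt (fun s => f s - B s) (Ioi t) t :=
      hfB.continuousWithinAt.mono Ioi_subset_Ici_self
    filter_upwards [hcont.eventually (eventually_gt_nhds (sub_pos.2 hlt))] with s hs
    exact (sub_pos.1 hs).le
  · filter_upwards [hfB.eventually_pos_nhdsGT (sub_eq_zero.2 heq.symm)
      (sub_pos.2 (bound t ht hhist heq.symm))] with s hs
    exact (sub_pos.1 hs).le

theorem hasDerivAt_div_one_add_mul {x₀ c t : ℝ} (ht : 1 + c * t ≠ 0) :
    HasDerivAt (fun s => x₀ / (1 + c * s)) (-(c / x₀) * (x₀ / (1 + c * t)) ^ 2) t := by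
  have hden : HasDerivAt (fun s => 1 + c * s) c t := by
    simpa using ((hasDerivAt_id t).const_mul c).const_add 1
  refine ((hasDerivAt_const t x₀).div hden ht).congr_deriv ?_
  field_simp
  ring

theorem half_le_div_one_add_mul {x₀ c t : ℝ} (hx₀ : 0 ≤ x₀) (hc : 0 ≤ c) (ht : 0 ≤ t)
    (hct : c * t ≤ 1) : x₀ / 2 ≤ x₀ / (1 + c * t) :=
  div_le_div_of_nonneg_left hx₀ (by positivity) (by linarith)

theorem kcap_mem_Icc {kmin kmax : ℝ} (hk : kmin ≤ kmax) (d t : ℝ) :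
    kcap kmin kmax d t ∈ Icc kmin kmax := by
  have hcos := Real.neg_one_le_cos (d * Real.pi * t)
  have hcos' := Real.cos_le_one (d * Real.pi * t)
  constructor <;> unfold kcap <;> nlinarith

theorem hcum_nonneg {a t : ℝ} {x : ℝ → ℝ} (ha : 0 ≤ a) (ht : 0 ≤ t)
    (hx : ∀ s ∈ Icc 0 t, 0 ≤ x s) : 0 ≤ hcum a x t :=
  mul_nonneg ha (intervalIntegral.integral_nonneg ht hx)

theorem neg_div_mul_sq_le_vnlm_rhs {r h kmin k v : ℝ} (hr : 0 ≤ r) (hh : 0 ≤ h)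
    (hkmin : 0 < kmin) (hk : kmin ≤ k) (hv : k ≤ v) :
    -(r / kmin * v ^ 2) ≤ (r - h) * v * (1 - v / k) := by
  have hk0 : 0 < k := hkmin.trans_le hk
  have hlog : v * (1 - v / k) = v - v ^ 2 / k := by field_simp
  have hlog_nonpos : v - v ^ 2 / k ≤ 0 := by
    rw [sub_nonpos, le_div_iff₀ hk0]
    nlinarith
  have hlog_ge : -(v ^ 2 / kmin) ≤ v - v ^ 2 / k := by
    have : v ^ 2 / k ≤ v ^ 2 / kmin := div_le_div_of_nonneg_left (sq_nonneg v) hkmin hk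
    linarith [hk0.trans_le hv]
  calc -(r / kmin * v ^ 2) = r * -(v ^ 2 / kmin) := by ring
    _ ≤ r * (v - v ^ 2 / k) := mul_le_mul_of_nonneg_left hlog_ge hr
    _ ≤ (r - h) * (v - v ^ 2 / k) := by nlinarith
    _ = (r - h) * v * (1 - v / k) := by rw [mul_assoc, hlog]

theorem IsVNLMSolOn.div_one_add_mul_le {a r d kmin kmax δ : ℝ} {x : ℝ → ℝ} {D : Set ℝ}
    (hsol : IsVNLMSolOn a r d kmin kmax x D) (ha : 0 ≤ a) (hr : 0 < r) (hkmin : 0 < kmin)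
    (hk : kmin ≤ kmax) (hD : Icc 0 δ ⊆ D) (hx₀ : 2 * kmax ≤ x 0)
    (hδ : 2 * r * x 0 / kmin * δ ≤ 1) {t : ℝ} (ht : t ∈ Icc 0 δ) :
    x 0 / (1 + 2 * r * x 0 / kmin * t) ≤ x t := by
  set c := 2 * r * x 0 / kmin
  have hx₀pos : 0 < x 0 := by linarith [hkmin.trans_le hk]
  have hc : 0 < c := by positivity
  have hden : ∀ s ∈ Icc 0 δ, 1 + c * s ≠ 0 := fun s hs => by nlinarith [hs.1]
  have hbarrier : ∀ s ∈ Icc 0 δ, HasDerivAt (fun s => x 0 / (1 + c * s))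
      (-(c / x 0) * (x 0 / (1 + c * s)) ^ 2) s := fun s hs =>
    hasDerivAt_div_one_add_mul (hden s hs)
  have hhalf : ∀ s ∈ Icc 0 δ, x 0 / 2 ≤ x 0 / (1 + c * s) := fun s hs =>
    half_le_div_one_add_mul hx₀pos.le hc.le hs.1
      ((mul_le_mul_of_nonneg_left hs.2 hc.le).trans hδ)
  refine boundary_le_image_of_deriv_boundary_lt_deriv_right (hsol.1.mono hD)
    (fun s hs => (hsol.2 s (hD (Ico_subset_Icc_self hs))).mono_of_mem_nhdsWithin
      (mem_of_superset (Icc_mem_nhdsGE hs.2) ((Icc_subset_Icc_left hs.1).trans hD)))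
    (fun s hs => (hbarrier s hs).continuousAt.continuousWithinAt)
    (fun s hs => (hbarrier s (Ico_subset_Icc_self hs)).hasDerivWithinAt)
    (by simp) (fun s hs hhist hcontact => ?_) ht
  have hs : s ∈ Icc 0 δ := Ico_subset_Icc_self hs
  have hk_le : kcap kmin kmax d s ≤ x s := by
    linarith [(kcap_mem_Icc hk d s).2, hhalf s hs]
  have hh : 0 ≤ hcum a x s := hcum_nonneg ha hs.1 fun u hu => by
    have hu' : u ∈ Icc 0 δ := ⟨hu.1, hu.2.trans hs.2⟩
    linarith [hhist u hu, hhalf u hu']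
  have hrhs := neg_div_mul_sq_le_vnlm_rhs hr.le hh hkmin (kcap_mem_Icc hk d s).1 hk_le
  have hxs : 0 < x s := by linarith [hhalf s hs]
  have hc_eq : c / x 0 = 2 * (r / kmin) := by simp only [c]; field_simp
  rw [← hcontact, hc_eq]
  nlinarith [mul_pos (div_pos hr hkmin) (pow_pos hxs 2)]

theorem vnlm_stays_large_general (a r d kmin kmax : ℝ)
    (ha : 0 < a) (hr : 0 < r)
    (hkmin : 0 < kmin) (hk : kmin ≤ kmax) :
    ∀ ε : ℝ, 0 < ε → ∃ δ : ℝ, 0 < δ ∧ ∃ x0 : ℝ, 0 < x0 ∧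
      ∀ b : EReal, (δ : EReal) < b →
        ∀ x : ℝ → ℝ, x 0 = x0 →
          IsVNLMSolOn a r d kmin kmax x {t : ℝ | 0 ≤ t ∧ (t : EReal) < b} →
          ∀ t ∈ Set.Icc (0:ℝ) δ, kmax * (r / (a * kmin) + 1) + ε < x t := by
  intro ε hε
  set M := kmax * (r / (a * kmin) + 1) + ε
  have hkmax_lt : kmax < M := by
    have : 0 ≤ kmax * (r / (a * kmin)) := by positivity [hkmin.trans_le hk]
    linarith
  set x₀ := 2 * (M + 1)
  have hx₀ : 0 < x₀ := by linarith [hkmin.trans_le hk]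
  set c := 2 * r * x₀ / kmin
  have hc : 0 < c := by positivity
  refine ⟨1 / c, by positivity, x₀, hx₀, fun b hb x hx hsol t ht => ?_⟩
  have hD : Icc 0 (1 / c) ⊆ {t : ℝ | 0 ≤ t ∧ (t : EReal) < b} := fun s hs =>
    ⟨hs.1, (EReal.coe_le_coe_iff.2 hs.2).trans_lt hb⟩
  have hcδ : c * (1 / c) ≤ 1 := by rw [mul_one_div_cancel hc.ne']
  have hbarrier := hsol.div_one_add_mul_le ha.le hr hkmin hk hD (by linarith) (hx ▸ hcδ) ht
  rw [hx] at hbarrier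
  calc M < x₀ / 2 := by linarith
    _ ≤ x₀ / (1 + c * t) := half_le_div_one_add_mul hx₀.le hc.le ht.1
      ((mul_le_mul_of_nonneg_left ht.2 hc.le).trans hcδ)
    _ ≤ x t := hbarrier

/-- for every `ε > 0` there exist `δ > 0` and an initial value
`x₀*(ε) > 0` such that every solution of the VNLM on `[0, b)` with `b > δ`
starting from `x₀*(ε)` satisfies `x(t) > k_max·(r/(a·k_min) + 1) + ε` on `[0, δ]`. -/
theorem vnlm_stays_large (a r d kmin kmax : ℝ)
    (ha : 0 < a) (hr : 0 < r) (hd : 0 < d)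
    (hkmin : 0 < kmin) (hk : kmin ≤ kmax) :
    ∀ ε : ℝ, 0 < ε → ∃ δ : ℝ, 0 < δ ∧ ∃ x0 : ℝ, 0 < x0 ∧
      ∀ b : EReal, (δ : EReal) < b →
        ∀ x : ℝ → ℝ, x 0 = x0 →
          IsVNLMSolOn a r d kmin kmax x {t : ℝ | 0 ≤ t ∧ (t : EReal) < b} →
          ∀ t ∈ Set.Icc (0:ℝ) δ, kmax * (r / (a * kmin) + 1) + ε < x t :=
  vnlm_stays_large_general a r d kmin kmax ha hr hkmin hk
end

section
/- Let τ₂ ≥ τ₃ > 0, C > 0 and b < ∞. Suppose x : [−τ₂, b) → ℝ is continuous and strictly positive, differentiable on (0, b), and satisfies the delayed differential inequality x′(t) ≤ C·x(t−τ₃)·x(t)·x(t−τ₂) for all t ∈ (0, b). Then x is bounded on [0, b): sup_{t ∈ [0, b)} x(t) < ∞. In particular, such a function cannot blow up in finite time. -/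
open Set Filter

/-- let `τ₂ ≥ τ₃ > 0`, `C > 0` and `b < ∞`. If
`x : [−τ₂, b) → ℝ` is continuous and strictly positive, differentiable on
`(0, b)`, and satisfies the delayed differential inequality
`x′(t) ≤ C·x(t−τ₃)·x(t)·x(t−τ₂)` on `(0, b)`, then `x` is bounded on `[0, b)`;
in particular no finite-time blow-up can occur. -/
theorem delayed_inequality_bounded (τ₂ τ₃ C b : ℝ)
    (hτ₃ : 0 < τ₃) (hττ : τ₃ ≤ τ₂) (hC : 0 < C)
    (x : ℝ → ℝ)
    (hcont : ContinuousOn x (Set.Ico (-τ₂) b))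
    (hpos : ∀ t ∈ Set.Ico (-τ₂) b, 0 < x t)
    (hdiff : ∀ t ∈ Set.Ioo (0:ℝ) b, DifferentiableAt ℝ x t)
    (hineq : ∀ t ∈ Set.Ioo (0:ℝ) b,
      deriv x t ≤ C * x (t - τ₃) * x t * x (t - τ₂)) :
    BddAbove (x '' Set.Ico 0 b) := by
  rcases le_or_gt b 0 with hb | hb
  · rw [Set.Ico_eq_empty (by linarith : ¬ (0:ℝ) < b), Set.image_empty]
    exact bddAbove_empty
  have hτ₂ : 0 < τ₂ := lt_of_lt_of_le hτ₃ hττ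
  -- M 0 : sup of x on the initial history [-τ₂, 0]
  have hsub0 : Set.Icc (-τ₂) (0:ℝ) ⊆ Set.Ico (-τ₂) b := fun t ht =>
    ⟨ht.1, lt_of_le_of_lt ht.2 hb⟩
  have hcpt : IsCompact (x '' Set.Icc (-τ₂) (0:ℝ)) :=
    (isCompact_Icc).image_of_continuousOn (hcont.mono hsub0)
  set M : ℕ → ℝ := fun n => Nat.rec (sSup (x '' Set.Icc (-τ₂) (0:ℝ)))
    (fun _ m => m * Real.exp (C * m ^ 2 * τ₃)) n with hM
  have hM0 : ∀ t ∈ Set.Icc (-τ₂) (0:ℝ), x t ≤ M 0 := fun t ht =>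
    le_csSup hcpt.bddAbove (Set.mem_image_of_mem x ht)
  have hM0pos : 0 < M 0 := lt_of_lt_of_le
    (hpos 0 ⟨by linarith, hb⟩) (hM0 0 ⟨by linarith, le_refl 0⟩)
  have hMsucc : ∀ n, M (n+1) = M n * Real.exp (C * (M n) ^ 2 * τ₃) := fun n => rfl
  have hMpos : ∀ n, 0 < M n := by
    intro n
    induction n with
    | zero => exact hM0pos
    | succ n ih => rw [hMsucc]; positivity
  have hMmono : ∀ n, M n ≤ M (n+1) := by
    intro n
    rw [hMsucc]
    nlinarith [Real.one_le_exp (by positivity : (0:ℝ) ≤ C * (M n) ^ 2 * τ₃), hMpos n]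
  -- the key inductive bound
  have key : ∀ n : ℕ, ∀ t ∈ Set.Ico (-τ₂) b, t ≤ n * τ₃ → x t ≤ M n := by
    intro n
    induction n with
    | zero =>
      intro t ht htn
      exact hM0 t ⟨ht.1, by simpa using htn⟩
    | succ n ih =>
      intro t ht htn
      rcases le_or_gt t (n * τ₃) with hcase | hcase
      · exact le_trans (ih t ht hcase) (hMmono n)
      -- main case : n*τ₃ < t ≤ (n+1)*τ₃, t < b
      set a : ℝ := n * τ₃ with ha
      have ha0 : 0 ≤ a := by positivity
      have hat : a < t := hcase
      have htb : t < b := ht.2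
      have hIccsub : Set.Icc a t ⊆ Set.Ico (-τ₂) b := fun s hs =>
        ⟨by linarith [hs.1], lt_of_le_of_lt hs.2 htb⟩
      -- delayed values are bounded by M n on (a, t]
      have hdelay : ∀ s, a < s → s ≤ t →
          x (s - τ₃) ≤ M n ∧ x (s - τ₂) ≤ M n ∧ 0 < x (s - τ₃) ∧ 0 < x (s - τ₂) := by
        intro s hs1 hs2
        have hs0 : 0 ≤ s := le_trans ha0 hs1.le
        have h3mem : s - τ₃ ∈ Set.Ico (-τ₂) b := ⟨by linarith, by linarith⟩
        have h2mem : s - τ₂ ∈ Set.Ico (-τ₂) b := ⟨by linarith, by linarith⟩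
        have h3le : s - τ₃ ≤ a := by
          have : t ≤ (n+1) * τ₃ := by push_cast at htn ⊢; linarith
          push_cast [ha]; linarith
        have h2le : s - τ₂ ≤ a := by linarith [h3le]
        exact ⟨ih _ h3mem h3le, ih _ h2mem h2le, hpos _ h3mem, hpos _ h2mem⟩
      -- g := log ∘ x minus linear term is antitone on [a, t]
      set g : ℝ → ℝ := fun s => Real.log (x s) - C * (M n) ^ 2 * s with hg
      have hgc : ContinuousOn g (Set.Icc a t) := by
        apply ContinuousOn.sub
        · exact (hcont.mono hIccsub).log (fun s hs => (hpos s (hIccsub hs)).ne')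
        · exact (continuous_const.mul continuous_id).continuousOn
      have hint : interior (Set.Icc a t) = Set.Ioo a t := interior_Icc
      have hderiv : ∀ s ∈ Set.Ioo a t,
          HasDerivAt g (deriv x s / x s - C * (M n) ^ 2) s := by
        intro s hs
        have hsIoo : s ∈ Set.Ioo (0:ℝ) b := ⟨lt_of_le_of_lt ha0 hs.1, lt_trans hs.2 htb⟩
        have hxd : HasDerivAt x (deriv x s) s := (hdiff s hsIoo).hasDerivAt
        have hxne : x s ≠ 0 := (hpos s (hIccsub ⟨hs.1.le, hs.2.le⟩)).ne'
        have h1 : HasDerivAt (fun u => Real.log (x u)) (deriv x s / x s) s :=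
          hxd.log hxne
        have h2 : HasDerivAt (fun u => C * (M n) ^ 2 * u) (C * (M n) ^ 2) s := by
          simpa using (hasDerivAt_id s).const_mul (C * (M n) ^ 2)
        exact h1.sub h2
      have hgd : DifferentiableOn ℝ g (interior (Set.Icc a t)) := by
        rw [hint]
        exact fun s hs => ((hderiv s hs).differentiableAt).differentiableWithinAt
      have hgd0 : ∀ s ∈ interior (Set.Icc a t), deriv g s ≤ 0 := by
        rw [hint]
        intro s hs
        rw [(hderiv s hs).deriv]
        have hsIoo : s ∈ Set.Ioo (0:ℝ) b := ⟨lt_of_le_of_lt ha0 hs.1, lt_trans hs.2 htb⟩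
        have hxpos : 0 < x s := hpos s (hIccsub ⟨hs.1.le, hs.2.le⟩)
        obtain ⟨h3, h2, h3p, h2p⟩ := hdelay s hs.1 hs.2.le
        have hle : deriv x s ≤ C * (M n) ^ 2 * x s := by
          calc deriv x s ≤ C * x (s - τ₃) * x s * x (s - τ₂) := hineq s hsIoo
            _ = C * x s * (x (s - τ₃) * x (s - τ₂)) := by ring
            _ ≤ C * x s * ((M n) ^ 2) := by
                apply mul_le_mul_of_nonneg_left _ (by positivity)
                nlinarith [hMpos n]
            _ = C * (M n) ^ 2 * x s := by ring
        rw [sub_nonpos, div_le_iff₀ hxpos]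
        exact hle
      have hanti : AntitoneOn g (Set.Icc a t) :=
        antitoneOn_of_deriv_nonpos (convex_Icc a t) hgc hgd hgd0
      have hgat : g t ≤ g a :=
        hanti ⟨le_refl a, hat.le⟩ ⟨hat.le, le_refl t⟩ hat.le
      -- unfold and conclude
      have hxa : x a ≤ M n := ih a (hIccsub ⟨le_refl a, hat.le⟩) (le_refl a)
      have hxapos : 0 < x a := hpos a (hIccsub ⟨le_refl a, hat.le⟩)
      have hxtpos : 0 < x t := hpos t ht
      have hta : t - a ≤ τ₃ := by push_cast [ha] at htn ⊢; linarith
      have hlog : Real.log (x t) ≤ Real.log (M n) + C * (M n) ^ 2 * τ₃ := by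
        have h1 : Real.log (x t) ≤ Real.log (x a) + C * (M n) ^ 2 * (t - a) := by
          simp only [hg] at hgat; linarith
        have h2 : Real.log (x a) ≤ Real.log (M n) :=
          Real.log_le_log hxapos hxa
        have h3 : C * (M n) ^ 2 * (t - a) ≤ C * (M n) ^ 2 * τ₃ := by
          apply mul_le_mul_of_nonneg_left hta (by positivity)
        linarith
      rw [hMsucc]
      calc x t = Real.exp (Real.log (x t)) := (Real.exp_log hxtpos).symm
        _ ≤ Real.exp (Real.log (M n) + C * (M n) ^ 2 * τ₃) := Real.exp_le_exp.mpr hlog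
        _ = M n * Real.exp (C * (M n) ^ 2 * τ₃) := by
            rw [Real.exp_add, Real.exp_log (hMpos n)]
  -- choose n with b ≤ n * τ₃
  obtain ⟨n, hn⟩ := exists_nat_ge (b / τ₃)
  have hbn : b ≤ n * τ₃ := by
    rw [div_le_iff₀ hτ₃] at hn; linarith
  refine ⟨M n, ?_⟩
  rintro y ⟨t, ht, rfl⟩
  exact key n t ⟨by linarith [ht.1], ht.2⟩ (by linarith [ht.2])
end
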